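/- arXiv:1202.2875 — 2 statements merged into one kernel-verified Lean document; each statement's English description precedes it below -/
import Mathlib

section
/- Let p be a positive integer and α, μ > 0. Define 𝒥_p(α,μ) = ∫_α^∞ z^p e^{-μz} Ei(-z) dz and 𝒦_p(α,μ) = (e^{-αμ} α^p / μ)·Ei(-α) + (e^{-α(μ+1)}/μ)·∑_{q=0}^{p-1} q!·C(p-1,q)·α^{p-q-1}/(μ+1)^{q+1}. Then the recursion 𝒥_p(α,μ) = 𝒦_p(α,μ) + (p/μ)·𝒥_{p-1}(α,μ) holds. -/
open MeasureTheory Real Set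

/-- The exponential integral: `Ei x = -∫_{-x}^∞ e^{-t}/t dt`. -/
noncomputable def Ei (x : ℝ) : ℝ := -∫ t in Ioi (-x), Real.exp (-t) / t


open Filter Topology Asymptotics


lemma tendsto_pow_mul_exp' (n : ℕ) {b : ℝ} (hb : 0 < b) :
    Tendsto (fun x : ℝ => x ^ n * Real.exp (-b * x)) atTop (𝓝 0) := by
  refine (tendsto_rpow_mul_exp_neg_mul_atTop_nhds_zero n b hb).congr' ?_
  filter_upwards [eventually_gt_atTop 0] with x hx
  rw [Real.rpow_natCast]

lemma integrableOn_pow_mul_exp' (n : ℕ) {b : ℝ} (hb : 0 < b) (α : ℝ) :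
    IntegrableOn (fun x : ℝ => x ^ n * Real.exp (-b * x)) (Ioi α) := by
  apply integrable_of_isBigO_exp_neg (half_pos hb)
  · fun_prop
  · have h1 : (fun x : ℝ => x ^ n * Real.exp (-(b/2) * x)) =O[atTop] (fun _ : ℝ => (1:ℝ)) :=
      (tendsto_pow_mul_exp' n (half_pos hb)).isBigO_one ℝ
    have h2 := h1.mul (isBigO_refl (fun x : ℝ => Real.exp (-(b/2) * x)) atTop)
    simp only [one_mul] at h2
    refine h2.congr' ?_ EventuallyEq.rfl
    filter_upwards with x
    rw [mul_assoc, ← Real.exp_add]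
    ring_nf

lemma g_integrableOn {c : ℝ} (hc : 0 < c) :
    IntegrableOn (fun t : ℝ => Real.exp (-t) / t) (Ioi c) := by
  have hint : IntegrableOn (fun t : ℝ => c⁻¹ * Real.exp (-1 * t)) (Ioi c) :=
    (exp_neg_integrableOn_Ioi c one_pos).const_mul _
  refine hint.mono' ?_ ?_
  · refine (ContinuousOn.div ?_ ?_ ?_).aestronglyMeasurable measurableSet_Ioi
    · fun_prop
    · fun_prop
    · intro t ht; exact (hc.trans ht).ne'
  · filter_upwards [ae_restrict_mem measurableSet_Ioi] with t ht
    have ht0 : 0 < t := hc.trans ht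
    rw [Real.norm_eq_abs, abs_div, abs_of_pos (Real.exp_pos _), abs_of_pos ht0]
    rw [div_le_iff₀ ht0, neg_one_mul]
    rw [mul_comm c⁻¹, mul_assoc]
    have h1 : (1:ℝ) ≤ c⁻¹ * t := by
      rw [← inv_mul_cancel₀ hc.ne']
      exact mul_le_mul_of_nonneg_left ht.le (inv_nonneg.2 hc.le)
    nlinarith [Real.exp_pos (-t)]


lemma Ei_neg_def {z : ℝ} : Ei (-z) = -∫ t in Ioi z, Real.exp (-t) / t := by
  simp only [Ei, neg_neg]

lemma Ei_bound {z : ℝ} (hz : 0 < z) : |Ei (-z)| ≤ Real.exp (-z) / z := by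
  rw [Ei_neg_def, abs_neg]
  have hexp : IntegrableOn (fun t : ℝ => Real.exp (-t)) (Ioi z) := by
    simpa using exp_neg_integrableOn_Ioi z one_pos
  have h0 : 0 ≤ ∫ t in Ioi z, Real.exp (-t) / t :=
    setIntegral_nonneg measurableSet_Ioi fun t ht =>
      div_nonneg (Real.exp_pos _).le (hz.trans ht).le
  rw [abs_of_nonneg h0]
  have hle : (∫ t in Ioi z, Real.exp (-t) / t) ≤ ∫ t in Ioi z, Real.exp (-t) / z := by
    refine setIntegral_mono_on (g_integrableOn hz) (hexp.div_const z) measurableSet_Ioi ?_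
    intro t ht
    gcongr
    exact ht.le
  calc (∫ t in Ioi z, Real.exp (-t) / t) ≤ ∫ t in Ioi z, Real.exp (-t) / z := hle
    _ = Real.exp (-z) / z := by rw [integral_div, integral_exp_neg_Ioi]

lemma Ei_hasDerivAt {z : ℝ} (hz : 0 < z) :
    HasDerivAt (fun b => Ei (-b)) (Real.exp (-z) / z) z := by
  set c := z / 2 with hcdef
  have hc0 : 0 < c := half_pos hz
  have hcz : c < z := half_lt_self hz
  set g : ℝ → ℝ := fun t => Real.exp (-t) / t with hg
  have hint : IntegrableOn g (Ioi c) := g_integrableOn hc0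
  have key : ∀ b ∈ Ioi c, Ei (-b) = (∫ t in c..b, g t) - ∫ t in Ioi c, g t := by
    intro b hb
    rw [Ei_neg_def, intervalIntegral.integral_of_le (le_of_lt hb)]
    have hsplit : (∫ t in Ioi c, g t) = (∫ t in Ioc c b, g t) + ∫ t in Ioi b, g t := by
      rw [← Set.Ioc_union_Ioi_eq_Ioi (le_of_lt hb)]
      exact setIntegral_union (Set.Ioc_disjoint_Ioi le_rfl) measurableSet_Ioi
        (hint.mono_set Set.Ioc_subset_Ioi_self) (hint.mono_set (Set.Ioi_subset_Ioi hb.le))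
    rw [hsplit]; ring
  have hmeas : StronglyMeasurable g :=
    ((Real.measurable_exp.comp measurable_neg).div measurable_id).stronglyMeasurable
  have hcontAt : ContinuousAt g z :=
    ContinuousAt.div ((Real.continuous_exp.comp continuous_neg).continuousAt)
      continuousAt_id hz.ne'
  have hii : IntervalIntegrable g volume c z := by
    rw [intervalIntegrable_iff_integrableOn_Ioc_of_le hcz.le]
    exact hint.mono_set Set.Ioc_subset_Ioi_self
  have hderiv : HasDerivAt (fun b => (∫ t in c..b, g t) - ∫ t in Ioi c, g t) (g z) z := by
    have h1 : HasDerivAt (fun b => ∫ t in c..b, g t) (g z) z :=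
      intervalIntegral.integral_hasDerivAt_right hii
        hmeas.stronglyMeasurableAtFilter hcontAt
    simpa using h1.sub_const (∫ t in Ioi c, g t)
  refine hderiv.congr_of_eventuallyEq ?_
  filter_upwards [isOpen_Ioi.mem_nhds hcz] with b hb
  exact key b hb

lemma Ei_continuousAt {z : ℝ} (hz : 0 < z) : ContinuousAt (fun b => Ei (-b)) z :=
  (Ei_hasDerivAt hz).continuousAt

lemma integrableOn_pow_exp_Ei (n : ℕ) {μ α : ℝ} (hμ : 0 < μ) (hα : 0 < α) :
    IntegrableOn (fun z : ℝ => z ^ n * Real.exp (-μ * z) * Ei (-z)) (Ioi α) := by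
  have hdom : IntegrableOn (fun z : ℝ => α⁻¹ * (z ^ n * Real.exp (-(μ+1) * z))) (Ioi α) :=
    (integrableOn_pow_mul_exp' n (by linarith) α).const_mul _
  refine hdom.mono' ?_ ?_
  · refine ContinuousOn.aestronglyMeasurable ?_ measurableSet_Ioi
    intro z hz
    have hz0 : 0 < z := hα.trans hz
    have h1 : ContinuousAt (fun z : ℝ => z ^ n * Real.exp (-μ * z)) z := by fun_prop
    exact (h1.mul (Ei_continuousAt hz0)).continuousWithinAt
  · filter_upwards [ae_restrict_mem measurableSet_Ioi] with z hz
    have hz0 : 0 < z := hα.trans hz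
    have hb := Ei_bound hz0
    rw [Real.norm_eq_abs, abs_mul, abs_mul, abs_of_nonneg (pow_nonneg hz0.le n),
      abs_of_pos (Real.exp_pos _)]
    have key : z ^ n * Real.exp (-μ * z) * (Real.exp (-z) / z)
        = z⁻¹ * (z ^ n * Real.exp (-(μ+1) * z)) := by
      rw [show -(μ+1) * z = -μ*z + -z by ring, Real.exp_add]; ring
    calc z ^ n * Real.exp (-μ * z) * |Ei (-z)|
        ≤ z ^ n * Real.exp (-μ * z) * (Real.exp (-z) / z) :=
          mul_le_mul_of_nonneg_left hb (by positivity)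
      _ = z⁻¹ * (z ^ n * Real.exp (-(μ+1) * z)) := key
      _ ≤ α⁻¹ * (z ^ n * Real.exp (-(μ+1) * z)) := by
          gcongr
          exact hz.le

lemma integral_pow_mul_exp_Ioi (n : ℕ) {b : ℝ} (hb : 0 < b) (α : ℝ) :
    ∫ z in Ioi α, z ^ n * Real.exp (-b * z)
      = Real.exp (-b * α) * ∑ q ∈ Finset.range (n+1),
          (Nat.descFactorial n q : ℝ) * α ^ (n - q) / b ^ (q+1) := by
  have hexp0 : Tendsto (fun z : ℝ => Real.exp (-b * z)) atTop (𝓝 0) :=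
    Real.tendsto_exp_atBot.comp (tendsto_id.const_mul_atTop_of_neg (neg_neg_iff_pos.2 hb))
  induction n with
  | zero =>
    have hderiv : ∀ x ∈ Ici α, HasDerivAt (fun z : ℝ => -Real.exp (-b*z)/b)
        (x ^ 0 * Real.exp (-b * x)) x := by
      intro x _
      have h1 : HasDerivAt (fun z : ℝ => Real.exp (-b*z)) (Real.exp (-b*x) * (-b * 1)) x :=
        (((hasDerivAt_id x).const_mul (-b)).exp)
      refine (h1.neg.div_const b).congr_deriv ?_
      field_simp
    have hint : IntegrableOn (fun x : ℝ => x ^ 0 * Real.exp (-b * x)) (Ioi α) :=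
      integrableOn_pow_mul_exp' 0 hb α
    have htend : Tendsto (fun z : ℝ => -Real.exp (-b*z)/b) atTop (𝓝 0) := by
      simpa using (hexp0.neg.div_const b)
    rw [integral_Ioi_of_hasDerivAt_of_tendsto' hderiv hint htend]
    simp [Finset.sum_range_succ]
    ring
  | succ n ih =>
    set F : ℝ → ℝ := fun z => -(z^(n+1) * Real.exp (-b*z))/b with hF
    have hderiv : ∀ x ∈ Ici α, HasDerivAt F
        (x^(n+1) * Real.exp (-b*x) - ((n+1:ℝ)/b) * (x^n * Real.exp (-b*x))) x := by
      intro x _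
      have h1 : HasDerivAt (fun z : ℝ => z^(n+1) * Real.exp (-b*z))
          (((n+1 : ℕ) : ℝ) * x ^ n * Real.exp (-b*x) + x^(n+1) * (Real.exp (-b*x) * (-b * 1))) x := by
        have := (hasDerivAt_pow (n+1) x).mul (((hasDerivAt_id x).const_mul (-b)).exp)
        simpa [Pi.mul_def] using this
      refine (h1.neg.div_const b).congr_deriv ?_
      push_cast
      field_simp
      ring
    have hint1 := integrableOn_pow_mul_exp' (n+1) hb α
    have hint2 := (integrableOn_pow_mul_exp' n hb α).const_mul ((n+1:ℝ)/b)
    have hF'int : IntegrableOn (fun x : ℝ =>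
        x^(n+1) * Real.exp (-b*x) - ((n+1:ℝ)/b) * (x^n * Real.exp (-b*x))) (Ioi α) :=
      hint1.sub hint2
    have htend : Tendsto F atTop (𝓝 0) := by
      have h := ((tendsto_pow_mul_exp' (n+1) hb).neg.div_const b)
      simp only [neg_zero, zero_div] at h
      exact h.congr fun z => by simp [hF]
    have key := integral_Ioi_of_hasDerivAt_of_tendsto' hderiv hF'int htend
    rw [integral_sub hint1 hint2, integral_const_mul] at key
    have hmain : (∫ z in Ioi α, z ^ (n+1) * Real.exp (-b * z))
        = ((n+1:ℝ)/b) * (∫ z in Ioi α, z ^ n * Real.exp (-b * z)) + (0 - F α) := by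
      linarith [key]
    rw [hmain, ih]
    have hFα : 0 - F α = Real.exp (-b*α) * (α^(n+1)/b) := by
      simp only [hF]; field_simp; ring
    rw [hFα]
    have hsum : ∑ q ∈ Finset.range (n+1+1), (((n+1).descFactorial q : ℕ) : ℝ) * α ^ (n+1-q) / b ^ (q+1)
        = α^(n+1)/b + ((n+1:ℝ)/b) * ∑ q ∈ Finset.range (n+1), ((n.descFactorial q : ℕ) : ℝ) * α ^ (n-q) / b ^ (q+1) := by
      rw [Finset.sum_range_succ', add_comm]
      simp only [Nat.succ_descFactorial_succ, Nat.succ_sub_succ, Nat.descFactorial_zero,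
        Nat.sub_zero, Nat.cast_one, one_mul, pow_one, Nat.cast_mul]
      congr 1
      · norm_num
      · rw [Finset.mul_sum]
        refine Finset.sum_congr rfl fun i _ => ?_
        push_cast
        field_simp
        ring
    rw [hsum]
    ring

/-- `𝒥_p(α,μ) = ∫_α^∞ z^p e^{-μz} Ei(-z) dz`. -/
noncomputable def J (p : ℕ) (α μ : ℝ) : ℝ :=
  ∫ z in Ioi α, z ^ p * Real.exp (-μ * z) * Ei (-z)

/-- `𝒦_p(α,μ) = (e^{-αμ} α^p/μ)·Ei(-α)
    + (e^{-α(μ+1)}/μ)·∑_{q=0}^{p-1} q!·C(p-1,q)·α^{p-q-1}/(μ+1)^{q+1}`. -/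
noncomputable def K (p : ℕ) (α μ : ℝ) : ℝ :=
  (Real.exp (-α * μ) * α ^ p / μ) * Ei (-α)
    + (Real.exp (-α * (μ + 1)) / μ) *
        ∑ q ∈ Finset.range p,
          (Nat.factorial q : ℝ) * (Nat.choose (p - 1) q : ℝ) * α ^ (p - q - 1)
            / (μ + 1) ^ (q + 1)

/-- Recursion `𝒥_p(α,μ) = 𝒦_p(α,μ) + (p/μ)·𝒥_{p-1}(α,μ)` for `p ≥ 1`, `α, μ > 0`. -/
theorem J_recursion (p : ℕ) (hp : 1 ≤ p) (α μ : ℝ) (hα : 0 < α) (hμ : 0 < μ) :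
    J p α μ = K p α μ + ((p : ℝ) / μ) * J (p - 1) α μ := by
  obtain ⟨n, rfl⟩ : ∃ n, p = n + 1 := ⟨p - 1, (Nat.succ_pred_eq_of_pos hp).symm⟩
  simp only [Nat.add_sub_cancel]
  have hμ1 : (0:ℝ) < μ + 1 := by linarith
  set F : ℝ → ℝ := fun z => -(z ^ (n+1) * Real.exp (-μ * z) * Ei (-z)) / μ with hF
  have hderiv : ∀ x ∈ Ici α, HasDerivAt F
      (x ^ (n+1) * Real.exp (-μ*x) * Ei (-x)
        - ((n+1:ℝ)/μ) * (x ^ n * Real.exp (-μ*x) * Ei (-x))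
        - (1/μ) * (x ^ n * Real.exp (-(μ+1)*x))) x := by
    intro x hx
    have hx0 : 0 < x := lt_of_lt_of_le hα hx
    have h1 : HasDerivAt (fun z : ℝ => z ^ (n+1) * Real.exp (-μ*z))
        (((n+1:ℕ):ℝ) * x ^ n * Real.exp (-μ*x) + x^(n+1) * (Real.exp (-μ*x) * (-μ * 1))) x := by
      simpa [Pi.mul_def] using (hasDerivAt_pow (n+1) x).mul (((hasDerivAt_id x).const_mul (-μ)).exp)
    have h2 : HasDerivAt (fun z : ℝ => z ^ (n+1) * Real.exp (-μ*z) * Ei (-z))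
        ((((n+1:ℕ):ℝ) * x ^ n * Real.exp (-μ*x) + x^(n+1) * (Real.exp (-μ*x) * (-μ * 1))) * Ei (-x)
          + x ^ (n+1) * Real.exp (-μ*x) * (Real.exp (-x) / x)) x :=
      h1.mul (Ei_hasDerivAt hx0)
    refine (h2.neg.div_const μ).congr_deriv ?_
    have hexp : Real.exp (-(μ+1)*x) = Real.exp (-μ*x) * Real.exp (-x) := by
      rw [← Real.exp_add]; ring_nf
    rw [hexp]
    push_cast
    field_simp
    ring
  have hint1 := integrableOn_pow_exp_Ei (n+1) hμ hα
  have hint0 : IntegrableOn (fun x : ℝ =>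
      ((n+1:ℝ)/μ) * (x ^ n * Real.exp (-μ*x) * Ei (-x))) (Ioi α) :=
    (integrableOn_pow_exp_Ei n hμ hα).const_mul ((n+1:ℝ)/μ)
  have hintg : IntegrableOn (fun x : ℝ =>
      (1/μ) * (x ^ n * Real.exp (-(μ+1)*x))) (Ioi α) :=
    (integrableOn_pow_mul_exp' n hμ1 α).const_mul (1/μ)
  have hint10 : IntegrableOn (fun x : ℝ =>
      x ^ (n+1) * Real.exp (-μ*x) * Ei (-x)
        - ((n+1:ℝ)/μ) * (x ^ n * Real.exp (-μ*x) * Ei (-x))) (Ioi α) :=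
    hint1.sub hint0
  have hF'int : IntegrableOn (fun x : ℝ =>
      x ^ (n+1) * Real.exp (-μ*x) * Ei (-x)
        - ((n+1:ℝ)/μ) * (x ^ n * Real.exp (-μ*x) * Ei (-x))
        - (1/μ) * (x ^ n * Real.exp (-(μ+1)*x))) (Ioi α) :=
    (hint1.sub hint0).sub hintg
  have htend : Tendsto F atTop (𝓝 0) := by
    have hg : Tendsto (fun z : ℝ => (1/(μ*α)) * (z^(n+1) * Real.exp (-(μ+1)*z))) atTop (𝓝 0) := by
      simpa using (tendsto_pow_mul_exp' (n+1) hμ1).const_mul (1/(μ*α))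
    refine squeeze_zero_norm' ?_ hg
    filter_upwards [eventually_gt_atTop α] with z hz
    have hz0 : 0 < z := hα.trans hz
    have hb := Ei_bound hz0
    rw [hF]
    rw [Real.norm_eq_abs, abs_div, abs_neg, abs_of_pos hμ, abs_mul, abs_mul,
      abs_of_nonneg (pow_nonneg hz0.le _), abs_of_pos (Real.exp_pos _)]
    calc z^(n+1) * Real.exp (-μ*z) * |Ei (-z)| / μ
        ≤ z^(n+1) * Real.exp (-μ*z) * (Real.exp (-z)/z) / μ := by gcongr
      _ = (1/(μ*z)) * (z^(n+1) * Real.exp (-(μ+1)*z)) := by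
          rw [show -(μ+1)*z = -μ*z + -z by ring, Real.exp_add]; field_simp
      _ ≤ (1/(μ*α)) * (z^(n+1) * Real.exp (-(μ+1)*z)) := by
          gcongr
  have key := integral_Ioi_of_hasDerivAt_of_tendsto' hderiv hF'int htend
  rw [integral_sub hint10 hintg, integral_sub hint1 hint0,
    integral_const_mul, integral_const_mul] at key
  have hgam := integral_pow_mul_exp_Ioi n hμ1 α
  have hJ : J (n+1) α μ - ((n+1:ℝ)/μ) * J n α μ
      - (1/μ) * (∫ z in Ioi α, z^n * Real.exp (-(μ+1)*z)) = 0 - F α := key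
  rw [hgam] at hJ
  have hsum : ∀ q : ℕ, (Nat.factorial q : ℝ) * (Nat.choose ((n+1)-1) q : ℝ)
        * α ^ ((n+1) - q - 1) / (μ+1)^(q+1)
      = (Nat.descFactorial n q : ℝ) * α ^ (n - q) / (μ+1)^(q+1) := by
    intro q
    rw [Nat.add_sub_cancel, Nat.sub_right_comm, Nat.add_sub_cancel]
    rw [← Nat.cast_mul, ← Nat.descFactorial_eq_factorial_mul_choose]
  have hK : K (n+1) α μ = (0 - F α) + (1/μ) * (Real.exp (-(μ+1)*α)
      * ∑ q ∈ Finset.range (n+1), (Nat.descFactorial n q : ℝ) * α ^ (n-q) / (μ+1)^(q+1)) := by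
    unfold K
    rw [Finset.sum_congr rfl fun q _ => hsum q]
    rw [hF]
    ring_nf
  rw [hK]
  linear_combination (norm := (push_cast; ring1)) hJ
end

section
/- Let X be Erlang with integer shape ν ≥ 1 and scale β > 0 and Z ≥ 0 an independent random variable with E[ln(1 + p_u Z)] < ∞. Then for any p_u > 0, E[log₂(1 + p_u X/(p_u Z + 1))] ≥ log₂(1 + p_u · exp(E[ln X] − E[ln(p_u Z + 1)])) = log₂(1 + p_u β · exp(ψ(ν) − E[ln(p_u Z + 1)])). -/
open MeasureTheory ProbabilityTheory Real

/-- The digamma function `ψ(x) = d/dx ln Γ(x)`. -/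
noncomputable def digamma (x : ℝ) : ℝ := deriv (fun y => Real.log (Real.Gamma y)) x

open Set
open scoped ENNReal NNReal

lemma log_le_rpow' {ε u : ℝ} (hε : 0 < ε) (hu : 0 < u) : Real.log u ≤ u ^ ε / ε := by
  rw [le_div_iff₀ hε, mul_comm]
  calc ε * Real.log u = Real.log (u ^ ε) := (Real.log_rpow hu ε).symm
  _ ≤ u ^ ε - 1 := Real.log_le_sub_one_of_pos (by positivity)
  _ ≤ u ^ ε := by linarith

lemma abs_log_le (ε : ℝ) (hε : 0 < ε) {t : ℝ} (ht : 0 < t) :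
    |Real.log t| ≤ (t ^ ε + t ^ (-ε)) / ε := by
  have hp : (0:ℝ) ≤ t ^ ε := Real.rpow_nonneg ht.le ε
  have hn : (0:ℝ) ≤ t ^ (-ε) := Real.rpow_nonneg ht.le (-ε)
  rw [abs_le]
  constructor
  · have := log_le_rpow' hε (inv_pos.mpr ht)
    rw [Real.log_inv, Real.inv_rpow ht.le, ← Real.rpow_neg ht.le] at this
    have : -( (t ^ ε + t ^ (-ε)) / ε) ≤ -(t ^ (-ε) / ε) := by
      rw [neg_le_neg_iff]; gcongr; linarith
    linarith [log_le_rpow' hε (inv_pos.mpr ht)]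
  · have h1 := log_le_rpow' hε ht
    have : t ^ ε / ε ≤ (t ^ ε + t ^ (-ε)) / ε := by gcongr; linarith
    linarith

lemma integrableOn_log_gamma {a : ℝ} (ha : 0 < a) :
    IntegrableOn (fun t => Real.log t * (t ^ (a - 1) * Real.exp (-t))) (Ioi 0) := by
  have h1 : IntegrableOn (fun t : ℝ => Real.exp (-t) * t ^ (3 * a / 2 - 1)) (Ioi 0) :=
    Real.GammaIntegral_convergent (by linarith)
  have h2 : IntegrableOn (fun t : ℝ => Real.exp (-t) * t ^ (a / 2 - 1)) (Ioi 0) :=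
    Real.GammaIntegral_convergent (by linarith)
  have hg : IntegrableOn (fun t : ℝ => (2 / a) * (Real.exp (-t) * t ^ (3 * a / 2 - 1)
      + Real.exp (-t) * t ^ (a / 2 - 1))) (Ioi 0) := ((h1.add h2).smul (2 / a)).congr
    (Filter.Eventually.of_forall (fun x => by simp [smul_eq_mul]))
  refine Integrable.mono' hg ?_ ?_
  · apply Measurable.aestronglyMeasurable
    exact Real.measurable_log.mul ((Measurable.pow measurable_id measurable_const).mul
      (measurable_id.neg.exp))
  · filter_upwards [ae_restrict_mem measurableSet_Ioi] with t ht
    rw [mem_Ioi] at ht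
    have hε : (0:ℝ) < a / 2 := by linarith
    have hb := abs_log_le (a / 2) hε ht
    have he : (0:ℝ) < Real.exp (-t) := Real.exp_pos _
    have hp : (0:ℝ) ≤ t ^ (a - 1) := Real.rpow_nonneg ht.le _
    rw [norm_mul, norm_mul, Real.norm_eq_abs, Real.norm_eq_abs, Real.norm_eq_abs,
      abs_of_nonneg hp, abs_of_nonneg he.le]
    have key : |Real.log t| * (t ^ (a - 1) * Real.exp (-t))
        ≤ ((t ^ (a/2) + t ^ (-(a/2))) / (a/2)) * (t ^ (a - 1) * Real.exp (-t)) := by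
      gcongr
    refine key.trans (le_of_eq ?_)
    have e1 : t ^ (a / 2) * t ^ (a - 1) = t ^ (3 * a / 2 - 1) := by
      rw [← Real.rpow_add ht]; norm_num; ring_nf
    have e2 : t ^ (-(a / 2)) * t ^ (a - 1) = t ^ (a / 2 - 1) := by
      rw [← Real.rpow_add ht]; norm_num; ring_nf
    rw [← e1, ← e2]
    field_simp

lemma hasDerivAt_realGamma {a : ℝ} (ha : 0 < a) :
    HasDerivAt Real.Gamma (∫ t in Ioi 0, Real.log t * (t ^ (a - 1) * Real.exp (-t))) a := by
  have hC := Complex.hasDerivAt_GammaIntegral (s := (a : ℂ)) (by simpa using ha)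
  have hval : (∫ t : ℝ in Ioi 0, (t : ℂ) ^ ((a : ℂ) - 1) * (Real.log t * Real.exp (-t)))
      = ((∫ t in Ioi 0, Real.log t * (t ^ (a - 1) * Real.exp (-t)) : ℝ) : ℂ) := by
    calc (∫ t : ℝ in Ioi 0, (t : ℂ) ^ ((a : ℂ) - 1) * (Real.log t * Real.exp (-t)))
        = ∫ t : ℝ in Ioi 0, ((Real.log t * (t ^ (a - 1) * Real.exp (-t)) : ℝ) : ℂ) := by
          refine setIntegral_congr_fun measurableSet_Ioi (fun t ht => ?_)
          rw [mem_Ioi] at ht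
          rw [show ((a : ℂ) - 1) = ((a - 1 : ℝ) : ℂ) by push_cast; ring,
            ← Complex.ofReal_cpow ht.le]
          push_cast
          ring
      _ = _ := integral_ofReal
  rw [hval] at hC
  have hre := hC.real_of_complex
  simp only [Complex.ofReal_re] at hre
  refine hre.congr_of_eventuallyEq ?_
  filter_upwards [eventually_gt_nhds ha] with x hx
  rw [← Complex.Gamma_eq_integral (by simpa using hx), Complex.Gamma_ofReal, Complex.ofReal_re]

lemma digamma_eq {a : ℝ} (ha : 0 < a) :
    digamma a = (∫ t in Ioi 0, Real.log t * (t ^ (a - 1) * Real.exp (-t))) / Real.Gamma a := by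
  have h := (hasDerivAt_realGamma ha).log (Real.Gamma_pos_of_pos ha).ne'
  exact h.deriv

lemma key_subst {a r : ℝ} (ha : 0 < a) (hr : 0 < r) :
    IntegrableOn (fun x => Real.log x * (x ^ (a - 1) * Real.exp (-(r * x)))) (Ioi 0) ∧
    (∫ x in Ioi 0, Real.log x * (x ^ (a - 1) * Real.exp (-(r * x))))
      = r⁻¹ * r ^ (1 - a) *
        ((∫ t in Ioi 0, Real.log t * (t ^ (a - 1) * Real.exp (-t))) - Real.log r * Real.Gamma a) := by
  have hgx : ∀ x ∈ Ioi (0:ℝ),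
      (fun u => (Real.log u - Real.log r) * (r ^ (1 - a) * (u ^ (a - 1) * Real.exp (-u)))) (r * x)
        = Real.log x * (x ^ (a - 1) * Real.exp (-(r * x))) := by
    intro x hx
    rw [mem_Ioi] at hx
    have h1 : Real.log (r * x) - Real.log r = Real.log x := by
      rw [Real.log_mul hr.ne' hx.ne']; ring
    have h2 : (r * x) ^ (a - 1) = r ^ (a - 1) * x ^ (a - 1) := Real.mul_rpow hr.le hx.le
    have h3 : r ^ (1 - a) * r ^ (a - 1) = 1 := by
      rw [← Real.rpow_add hr]; norm_num
    dsimp only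
    rw [h1, h2]
    calc Real.log x * (r ^ (1 - a) * (r ^ (a - 1) * x ^ (a - 1) * Real.exp (-(r * x))))
        = Real.log x * ((r ^ (1 - a) * r ^ (a - 1)) * (x ^ (a - 1) * Real.exp (-(r * x)))) := by
          ring
      _ = _ := by rw [h3]; ring
  have hGa : IntegrableOn (fun u : ℝ => Real.exp (-u) * u ^ (a - 1)) (Ioi 0) :=
    Real.GammaIntegral_convergent ha
  have hexp : IntegrableOn (fun u => r ^ (1 - a) * (Real.log u * (u ^ (a - 1) * Real.exp (-u)))
      - (Real.log r * r ^ (1 - a)) * (Real.exp (-u) * u ^ (a - 1))) (Ioi 0) :=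
    ((integrableOn_log_gamma ha).const_mul _).sub (hGa.const_mul _)
  have hgint : IntegrableOn
      (fun u => (Real.log u - Real.log r) * (r ^ (1 - a) * (u ^ (a - 1) * Real.exp (-u))))
      (Ioi 0) :=
    hexp.congr (Filter.Eventually.of_forall (fun u => by dsimp only; ring))
  have hgval : (∫ u in Ioi 0,
        (Real.log u - Real.log r) * (r ^ (1 - a) * (u ^ (a - 1) * Real.exp (-u))))
      = r ^ (1 - a) *
        ((∫ t in Ioi 0, Real.log t * (t ^ (a - 1) * Real.exp (-t))) - Real.log r * Real.Gamma a) := by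
    rw [setIntegral_congr_fun measurableSet_Ioi
      (fun u (_ : u ∈ Ioi 0) => by ring :
        ∀ u ∈ Ioi (0:ℝ), (Real.log u - Real.log r) * (r ^ (1 - a) * (u ^ (a - 1) * Real.exp (-u)))
          = r ^ (1 - a) * (Real.log u * (u ^ (a - 1) * Real.exp (-u)))
            - (Real.log r * r ^ (1 - a)) * (Real.exp (-u) * u ^ (a - 1)))]
    rw [integral_sub ((integrableOn_log_gamma ha).const_mul _) (hGa.const_mul _),
      integral_const_mul, integral_const_mul, ← Real.Gamma_eq_integral ha]
    ring
  constructor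
  · have := (integrableOn_Ioi_comp_mul_left_iff
      (fun u => (Real.log u - Real.log r) * (r ^ (1 - a) * (u ^ (a - 1) * Real.exp (-u))))
      0 hr).mpr (by rwa [mul_zero])
    exact this.congr (ae_restrict_of_forall_mem measurableSet_Ioi hgx)
  · rw [← setIntegral_congr_fun measurableSet_Ioi hgx,
      integral_comp_mul_left_Ioi
        (fun u => (Real.log u - Real.log r) * (r ^ (1 - a) * (u ^ (a - 1) * Real.exp (-u))))
        0 hr, mul_zero, hgval, smul_eq_mul]
    ring

section GammaLog
open ProbabilityTheory

variable {a r : ℝ}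

lemma gammaMeasure_eq (a r : ℝ) : gammaMeasure a r
    = volume.withDensity (fun x => ((gammaPDFReal a r x).toNNReal : ℝ≥0∞)) := rfl

lemma F_zero (ha : 0 < a) (hr : 0 < r) : ∀ x ∈ Iic (0:ℝ),
    gammaPDFReal a r x * Real.log x = 0 := by
  intro x hx
  rw [mem_Iic] at hx
  rcases lt_or_eq_of_le hx with h | h
  · rw [gammaPDFReal, if_neg (not_le.mpr h), zero_mul]
  · rw [h, Real.log_zero, mul_zero]

lemma F_Ioi (ha : 0 < a) (hr : 0 < r) : ∀ x ∈ Ioi (0:ℝ),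
    gammaPDFReal a r x * Real.log x
      = (r ^ a / Real.Gamma a) * (Real.log x * (x ^ (a - 1) * Real.exp (-(r * x)))) := by
  intro x hx
  rw [mem_Ioi] at hx
  rw [gammaPDFReal, if_pos hx.le]
  ring

lemma F_integrable (ha : 0 < a) (hr : 0 < r) :
    Integrable (fun x => gammaPDFReal a r x * Real.log x) := by
  rw [← integrableOn_univ, ← Set.Iic_union_Ioi (a := (0:ℝ))]
  refine IntegrableOn.union ?_ ?_
  · exact (integrable_zero _ _ _).congr
      (ae_restrict_of_forall_mem measurableSet_Iic fun x hx => (F_zero ha hr x hx).symm)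
  · exact (((key_subst ha hr).1.const_mul (r ^ a / Real.Gamma a)).congr
      (ae_restrict_of_forall_mem measurableSet_Ioi fun x hx => (F_Ioi ha hr x hx).symm))

lemma F_integral (ha : 0 < a) (hr : 0 < r) :
    ∫ x, gammaPDFReal a r x * Real.log x = digamma a - Real.log r := by
  have hΓ : Real.Gamma a ≠ 0 := (Real.Gamma_pos_of_pos ha).ne'
  have hra : r ^ a * (r⁻¹ * r ^ (1 - a)) = 1 := by
    rw [mul_comm r⁻¹, ← mul_assoc, ← Real.rpow_add hr]
    norm_num [Real.rpow_one]
    exact mul_inv_cancel₀ hr.ne'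
  have := integral_add_compl (measurableSet_Iic (a := (0:ℝ)))
    (F_integrable ha hr)
  rw [compl_Iic] at this
  rw [← this, setIntegral_congr_fun measurableSet_Iic (F_zero ha hr), integral_zero, zero_add,
    setIntegral_congr_fun measurableSet_Ioi (F_Ioi ha hr), integral_const_mul, (key_subst ha hr).2,
    digamma_eq ha]
  have h2 : r⁻¹ * r ^ (1 - a) = (r ^ a)⁻¹ := eq_inv_of_mul_eq_one_right hra
  rw [h2]
  have hpa : r ^ a ≠ 0 := (Real.rpow_pos_of_pos hr a).ne'
  field_simp

lemma toNNReal_smul_log (ha : 0 < a) (hr : 0 < r) (x : ℝ) :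
    ((gammaPDFReal a r x).toNNReal : ℝ) • Real.log x = gammaPDFReal a r x * Real.log x := by
  rw [smul_eq_mul, Real.coe_toNNReal _ (gammaPDFReal_nonneg ha hr x)]

lemma integrable_log_gammaMeasure (ha : 0 < a) (hr : 0 < r) :
    Integrable Real.log (gammaMeasure a r) := by
  rw [gammaMeasure_eq]
  rw [integrable_withDensity_iff_integrable_smul
    ((measurable_gammaPDFReal a r).real_toNNReal)]
  refine (F_integrable ha hr).congr (Filter.Eventually.of_forall fun x => ?_)
  simp only [NNReal.smul_def, smul_eq_mul, Real.coe_toNNReal _ (gammaPDFReal_nonneg ha hr x)]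

lemma integral_log_gammaMeasure (ha : 0 < a) (hr : 0 < r) :
    ∫ x, Real.log x ∂(gammaMeasure a r) = digamma a - Real.log r := by
  rw [gammaMeasure_eq,
    integral_withDensity_eq_integral_smul ((measurable_gammaPDFReal a r).real_toNNReal)]
  rw [← F_integral ha hr]
  refine integral_congr_ae (Filter.Eventually.of_forall fun x => ?_)
  simp only [NNReal.smul_def, smul_eq_mul, Real.coe_toNNReal _ (gammaPDFReal_nonneg ha hr x)]

lemma gammaMeasure_Iic_zero (ha : 0 < a) (hr : 0 < r) : gammaMeasure a r (Iic 0) = 0 := by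
  rw [gammaMeasure, withDensity_apply _ measurableSet_Iic]
  have : Iic (0:ℝ) = Iio 0 ∪ {0} := by
    ext x; simp [le_iff_lt_or_eq]
  rw [this]
  rw [MeasureTheory.lintegral_union (measurableSet_singleton 0) ?_]
  · rw [lintegral_gammaPDF_of_nonpos le_rfl]
    simp [MeasureTheory.Measure.restrict_eq_zero.mpr (by simp : volume ({(0:ℝ)}) = 0)]
  · simp only [Set.disjoint_left, mem_Iio, mem_singleton_iff]
    exact fun a ha' => ha'.ne

end GammaLog

section Convexity

variable {pu : ℝ}

lemma rate_pos (hpu : 0 < pu) (y : ℝ) : (0:ℝ) < 1 + pu * Real.exp y := by positivity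

lemma rate_hasDeriv (hpu : 0 < pu) (y : ℝ) :
    HasDerivAt (fun y => Real.log (1 + pu * Real.exp y))
      (1 - (1 + pu * Real.exp y)⁻¹) y := by
  have h1 : HasDerivAt (fun y => 1 + pu * Real.exp y) (pu * Real.exp y) y :=
    ((Real.hasDerivAt_exp y).const_mul pu).const_add 1
  have := h1.log (rate_pos hpu y).ne'
  convert this using 1
  field_simp
  ring

lemma rate_convexOn (hpu : 0 < pu) :
    ConvexOn ℝ Set.univ (fun y => Real.log (1 + pu * Real.exp y)) := by
  have hderiv : deriv (fun y => Real.log (1 + pu * Real.exp y))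
      = fun y => 1 - (1 + pu * Real.exp y)⁻¹ := funext fun y => (rate_hasDeriv hpu y).deriv
  refine MonotoneOn.convexOn_of_deriv convex_univ ?_ ?_ ?_
  · exact Continuous.continuousOn (by
      exact ((continuous_const.add (continuous_const.mul Real.continuous_exp)).log
        fun y => (rate_pos hpu y).ne'))
  · intro y _
    exact ((rate_hasDeriv hpu y).differentiableAt).differentiableWithinAt
  · rw [interior_univ, hderiv]
    intro y1 _ y2 _ h
    have e1 : (0:ℝ) < 1 + pu * Real.exp y1 := rate_pos hpu y1
    have : (1 + pu * Real.exp y2)⁻¹ ≤ (1 + pu * Real.exp y1)⁻¹ :=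
      inv_anti₀ e1 (by nlinarith [Real.exp_le_exp.mpr h])
    simp only
    linarith

lemma rate_bound (hpu : 0 < pu) (y : ℝ) :
    Real.log (1 + pu * Real.exp y) ≤ Real.log (1 + pu) + |y| := by
  have h1 : 1 + pu * Real.exp y ≤ (1 + pu) * Real.exp |y| := by
    have e1 : (1:ℝ) ≤ Real.exp |y| := Real.one_le_exp (abs_nonneg y)
    have e2 : Real.exp y ≤ Real.exp |y| := Real.exp_le_exp.mpr (le_abs_self y)
    nlinarith
  calc Real.log (1 + pu * Real.exp y) ≤ Real.log ((1 + pu) * Real.exp |y|) :=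
        Real.log_le_log (rate_pos hpu y) h1
    _ = Real.log (1 + pu) + |y| := by
        rw [Real.log_mul (by positivity) (Real.exp_pos _).ne', Real.log_exp]

lemma rate_nonneg (hpu : 0 < pu) (y : ℝ) : 0 ≤ Real.log (1 + pu * Real.exp y) :=
  Real.log_nonneg (by nlinarith [Real.exp_pos y])

end Convexity

/-- Jensen lower bound on the ergodic rate (Proposition 3): for `X` Erlang with
integer shape `ν ≥ 1` and scale `β > 0`, independent of `Z ≥ 0` with
`E[ln(1+p_u Z)] < ∞`, and any `p_u > 0`,
`E[log₂(1 + p_u X/(p_u Z+1))] ≥ log₂(1 + p_u·exp(E[ln X] − E[ln(p_u Z+1)]))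
 = log₂(1 + p_u β·exp(ψ(ν) − E[ln(p_u Z+1)]))`. -/
theorem rate_jensen_lower_bound
    {Ω : Type*} [MeasureSpace Ω] [IsProbabilityMeasure (ℙ : Measure Ω)]
    (ν : ℕ) (hν : 1 ≤ ν) (β : ℝ) (hβ : 0 < β)
    (X Z : Ω → ℝ) (hXm : Measurable X) (hZm : Measurable Z)
    (hZnonneg : ∀ ω, 0 ≤ Z ω)
    (hindep : IndepFun X Z ℙ)
    (hXlaw : Measure.map X ℙ = gammaMeasure (ν : ℝ) (1 / β))
    (pu : ℝ) (hpu : 0 < pu)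
    (hint : Integrable (fun ω => Real.log (1 + pu * Z ω)) ℙ) :
    (∫ ω, Real.logb 2 (1 + pu * X ω / (pu * Z ω + 1)) ∂ℙ)
        ≥ Real.logb 2 (1 + pu *
            Real.exp ((∫ ω, Real.log (X ω) ∂ℙ) - ∫ ω, Real.log (pu * Z ω + 1) ∂ℙ))
      ∧ Real.logb 2 (1 + pu *
            Real.exp ((∫ ω, Real.log (X ω) ∂ℙ) - ∫ ω, Real.log (pu * Z ω + 1) ∂ℙ))
          = Real.logb 2 (1 + pu * β *
              Real.exp (digamma (ν : ℝ) - ∫ ω, Real.log (pu * Z ω + 1) ∂ℙ)) := by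
  have ha : (0:ℝ) < (ν : ℝ) := by exact_mod_cast Nat.lt_of_lt_of_le Nat.zero_lt_one hν
  have hr : (0:ℝ) < 1 / β := by positivity
  have hlog2 : (0:ℝ) < Real.log 2 := Real.log_pos one_lt_two
  -- integrability of log X
  have hlogX_int : Integrable (fun ω => Real.log (X ω)) ℙ := by
    have h0 : Integrable Real.log (Measure.map X ℙ) := by
      rw [hXlaw]; exact integrable_log_gammaMeasure ha hr
    exact (integrable_map_measure Real.measurable_log.aestronglyMeasurable
      hXm.aemeasurable).mp h0
  -- value of E[log X]
  have hIX : (∫ ω, Real.log (X ω) ∂ℙ) = digamma (ν : ℝ) + Real.log β := by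
    have h0 : (∫ x, Real.log x ∂(Measure.map X ℙ)) = digamma (ν : ℝ) - Real.log (1 / β) := by
      rw [hXlaw]; exact integral_log_gammaMeasure ha hr
    rw [integral_map hXm.aemeasurable Real.measurable_log.aestronglyMeasurable] at h0
    rw [h0, one_div, Real.log_inv]
    ring
  -- Z side
  have hZ1 : ∀ ω, (0:ℝ) < pu * Z ω + 1 := fun ω => by nlinarith [hZnonneg ω]
  have hIZint : Integrable (fun ω => Real.log (pu * Z ω + 1)) ℙ :=
    hint.congr (Filter.Eventually.of_forall fun ω =>
      show Real.log (1 + pu * Z ω) = Real.log (pu * Z ω + 1) by rw [add_comm])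
  set Y : Ω → ℝ := fun ω => Real.log (X ω) - Real.log (pu * Z ω + 1) with hY
  have hYint : Integrable Y ℙ := hlogX_int.sub hIZint
  have hYmeas : Measurable Y := (Real.measurable_log.comp hXm).sub
    (Real.measurable_log.comp ((measurable_const.mul hZm).add measurable_const))
  -- the convex function
  set g : ℝ → ℝ := fun y => Real.logb 2 (1 + pu * Real.exp y) with hgdef
  have hgeq : ∀ y, g y = (Real.log 2)⁻¹ * Real.log (1 + pu * Real.exp y) := fun y => by
    rw [hgdef]; simp only [Real.logb, div_eq_inv_mul]
  have hg_conv : ConvexOn ℝ Set.univ g := by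
    have hfe : g = fun y => (Real.log 2)⁻¹ • Real.log (1 + pu * Real.exp y) :=
      funext fun y => by rw [hgeq, smul_eq_mul]
    rw [hfe]
    exact (rate_convexOn hpu).smul (by positivity)
  have hg_cont : Continuous g := by
    have h1 : Continuous fun y => Real.log (1 + pu * Real.exp y) :=
      (continuous_const.add (continuous_const.mul Real.continuous_exp)).log
        fun y => (rate_pos hpu y).ne'
    have hfe : g = fun y => (Real.log 2)⁻¹ * Real.log (1 + pu * Real.exp y) := funext hgeq
    rw [hfe]
    exact continuous_const.mul h1
  -- a.e. positivity of X
  have hX_pos : ∀ᵐ ω ∂(ℙ : Measure Ω), 0 < X ω := by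
    rw [MeasureTheory.ae_iff]
    have hset : {ω | ¬ 0 < X ω} = X ⁻¹' (Iic 0) := by
      ext ω; simp [not_lt]
    rw [hset, ← Measure.map_apply hXm measurableSet_Iic, hXlaw,
      gammaMeasure_Iic_zero ha hr]
  -- a.e. identification of g ∘ Y with the integrand
  have heq : ∀ᵐ ω ∂(ℙ : Measure Ω),
      g (Y ω) = Real.logb 2 (1 + pu * X ω / (pu * Z ω + 1)) := by
    filter_upwards [hX_pos] with ω hx
    rw [hgdef]
    simp only
    rw [hY]
    simp only
    rw [Real.exp_sub, Real.exp_log hx, Real.exp_log (hZ1 ω), mul_div_assoc]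
  -- integrability of g ∘ Y
  have hgY_int : Integrable (fun ω => g (Y ω)) ℙ := by
    refine Integrable.mono' ((integrable_const (Real.logb 2 (1 + pu))).add
      ((hYint.abs.div_const (Real.log 2)))) ?_ ?_
    · exact ((hg_cont.measurable.comp hYmeas)).aestronglyMeasurable
    · refine Filter.Eventually.of_forall fun ω => ?_
      have hnn : 0 ≤ g (Y ω) := by
        rw [hgeq]
        exact mul_nonneg (by positivity) (rate_nonneg hpu (Y ω))
      rw [Real.norm_eq_abs, abs_of_nonneg hnn, hgeq]
      have hb := rate_bound hpu (Y ω)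
      have : (Real.log 2)⁻¹ * Real.log (1 + pu * Real.exp (Y ω))
          ≤ (Real.log 2)⁻¹ * (Real.log (1 + pu) + |Y ω|) := by
        apply mul_le_mul_of_nonneg_left hb (by positivity)
      refine this.trans (le_of_eq ?_)
      rw [Real.logb, div_eq_inv_mul]
      simp only [Pi.add_apply]
      field_simp
  -- Jensen
  have hjen := hg_conv.map_integral_le hg_cont.continuousOn isClosed_univ
    (Filter.Eventually.of_forall fun ω => Set.mem_univ (Y ω)) hYint hgY_int
  have hEY : (∫ ω, Y ω ∂ℙ) = (∫ ω, Real.log (X ω) ∂ℙ) - ∫ ω, Real.log (pu * Z ω + 1) ∂ℙ :=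
    integral_sub hlogX_int hIZint
  constructor
  · have h1 : (∫ ω, Real.logb 2 (1 + pu * X ω / (pu * Z ω + 1)) ∂ℙ)
        = ∫ ω, g (Y ω) ∂ℙ := (integral_congr_ae heq).symm
    rw [h1, ge_iff_le, ← hEY]
    exact hjen
  · rw [hIX]
    congr 1
    rw [show digamma (ν:ℝ) + Real.log β - (∫ ω, Real.log (pu * Z ω + 1) ∂ℙ)
        = Real.log β + (digamma (ν:ℝ) - ∫ ω, Real.log (pu * Z ω + 1) ∂ℙ) by ring,
      Real.exp_add, Real.exp_log hβ]
    ring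
end
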